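/- arXiv:2102.07687 — 5 statements merged into one kernel-verified Lean document; each statement's English description precedes it below -/
import Mathlib

section
/- The influence index λ(γ) := −|V_γ| + |E_γ| − dim((ker S)_{supp γ}) + dim(P⁰_γ(coker S)) is a submodular function on subnetworks: for any subnetworks γ₁, γ₂, λ(γ₁ ∪ γ₂) ≤ λ(γ₁) + λ(γ₂) − λ(γ₁ ∩ γ₂). -/
/-- Coordinate projection `P_v : ℝ^V → ℝ^V` setting all coordinates outside `v` to zero. -/
def coordProj (V : Type) [DecidableEq V] (v : Finset V) : (V → ℝ) →ₗ[ℝ] (V → ℝ) where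
  toFun x := fun i => if i ∈ v then x i else 0
  map_add' x y := by funext i; by_cases h : i ∈ v <;> simp [h]
  map_smul' c x := by funext i; by_cases h : i ∈ v <;> simp [h]

/-- The subspace of vectors in `ℝ^E` supported on a subset `e ⊆ E`. -/
def supportedIn (E : Type) [DecidableEq E] (e : Finset E) : Submodule ℝ (E → ℝ) where
  carrier := {c | ∀ A : E, A ∉ e → c A = 0}
  add_mem' := by intro a b ha hb A hA; simp [ha A hA, hb A hA]
  zero_mem' := by intro A hA; rfl
  smul_mem' := by intro r a ha A hA; simp [ha A hA]

/-- The influence index `λ(γ) = -|V_γ| + |E_γ| - dim (ker S)_{supp γ} + dim P⁰_γ(coker S)`,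
where `coker S` is identified with `ker Sᵀ`. -/
noncomputable def influenceIndex (V E : Type) [Fintype V] [Fintype E]
    [DecidableEq V] [DecidableEq E] (S : Matrix V E ℝ)
    (Vγ : Finset V) (Eγ : Finset E) : ℤ :=
  -(Vγ.card : ℤ) + (Eγ.card : ℤ)
    - (Module.finrank ℝ ↥(LinearMap.ker S.mulVecLin ⊓ supportedIn E Eγ) : ℤ)
    + (Module.finrank ℝ
        (Submodule.map (coordProj V Vγ) (LinearMap.ker (Matrix.transpose S).mulVecLin)) : ℤ)

open Module Submodule

lemma supportedIn_mono (E : Type) [DecidableEq E] {e e' : Finset E} (h : e ⊆ e') :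
    supportedIn E e ≤ supportedIn E e' :=
  fun _ hc A hA => hc A fun hm => hA (h hm)

lemma supportedIn_inter (E : Type) [DecidableEq E] (e e' : Finset E) :
    supportedIn E (e ∩ e') = supportedIn E e ⊓ supportedIn E e' := by
  apply le_antisymm
  · exact le_inf (supportedIn_mono E Finset.inter_subset_left)
      (supportedIn_mono E Finset.inter_subset_right)
  · rintro c ⟨h1, h2⟩ A hA
    rcases (show A ∉ e ∨ A ∉ e' by by_cases h : A ∈ e <;> simp_all [Finset.mem_inter]) with h | h
    · exact h1 A h
    · exact h2 A h

/-- Supermodularity of `W ↦ dim (K ⊓ supportedIn W)`. -/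
lemma inf_supportedIn_supermodular (E : Type) [Fintype E] [DecidableEq E]
    (K : Submodule ℝ (E → ℝ)) (e₁ e₂ : Finset E) :
    finrank ℝ ↥(K ⊓ supportedIn E e₁) + finrank ℝ ↥(K ⊓ supportedIn E e₂) ≤
      finrank ℝ ↥(K ⊓ supportedIn E (e₁ ∪ e₂)) +
        finrank ℝ ↥(K ⊓ supportedIn E (e₁ ∩ e₂)) := by
  have h := Submodule.finrank_sup_add_finrank_inf_eq (K ⊓ supportedIn E e₁)
    (K ⊓ supportedIn E e₂)
  rw [← h]
  have hle : (K ⊓ supportedIn E e₁) ⊔ (K ⊓ supportedIn E e₂) ≤ K ⊓ supportedIn E (e₁ ∪ e₂) :=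
    sup_le (inf_le_inf le_rfl (supportedIn_mono E Finset.subset_union_left))
      (inf_le_inf le_rfl (supportedIn_mono E Finset.subset_union_right))
  have heq : (K ⊓ supportedIn E e₁) ⊓ (K ⊓ supportedIn E e₂)
      = K ⊓ supportedIn E (e₁ ∩ e₂) := by
    rw [supportedIn_inter]
    exact (inf_inf_distrib_left K _ _).symm
  rw [heq]
  exact add_le_add (Submodule.finrank_mono hle) le_rfl

lemma ker_coordProj (V : Type) [Fintype V] [DecidableEq V] (v : Finset V) :
    LinearMap.ker (coordProj V v) = supportedIn V vᶜ := by
  ext x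
  constructor
  · intro hx A hA
    have := congrFun (show coordProj V v x = 0 from hx) A
    simpa [coordProj, Finset.mem_compl.not.mp (by simpa using hA)] using
      (by simpa [coordProj, show A ∈ v by simpa using hA] using this)
  · intro hx
    funext A
    by_cases h : A ∈ v
    · simpa [coordProj, h] using hx A (by simp [h])
    · simp [coordProj, h]

/-- Rank formula for the image of a submodule. -/
lemma finrank_map_add_finrank_inf_ker {W : Type} [AddCommGroup W] [Module ℝ W]
    [FiniteDimensional ℝ W] (C : Submodule ℝ W) (f : W →ₗ[ℝ] W) :
    finrank ℝ (C.map f) + finrank ℝ ↥(C ⊓ LinearMap.ker f) = finrank ℝ C := by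
  have h := LinearMap.finrank_range_add_finrank_ker (f.domRestrict C)
  rw [LinearMap.range_domRestrict, LinearMap.ker_domRestrict] at h
  have e : (comap C.subtype (LinearMap.ker f)) ≃ₗ[ℝ] ↥(C ⊓ LinearMap.ker f) := by
    have heq : comap C.subtype (LinearMap.ker f) = comap C.subtype (C ⊓ LinearMap.ker f) := by
      ext x; simp [x.2]
    rw [heq]
    exact comapSubtypeEquivOfLe inf_le_left
  rw [e.finrank_eq] at h
  exact h

/-- Submodularity of `v ↦ dim P_v(C)`. -/
lemma finrank_map_coordProj_submodular (V : Type) [Fintype V] [DecidableEq V]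
    (C : Submodule ℝ (V → ℝ)) (v₁ v₂ : Finset V) :
    finrank ℝ (C.map (coordProj V (v₁ ∪ v₂))) + finrank ℝ (C.map (coordProj V (v₁ ∩ v₂))) ≤
      finrank ℝ (C.map (coordProj V v₁)) + finrank ℝ (C.map (coordProj V v₂)) := by
  have key : ∀ v : Finset V, finrank ℝ (C.map (coordProj V v))
      + finrank ℝ ↥(C ⊓ supportedIn V vᶜ) = finrank ℝ C := by
    intro v
    rw [← ker_coordProj]
    exact finrank_map_add_finrank_inf_ker C _
  have hsup := inf_supportedIn_supermodular V C v₁ᶜ v₂ᶜ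
  rw [← Finset.compl_inter, ← Finset.compl_union] at hsup
  have h1 := key v₁
  have h2 := key v₂
  have h3 := key (v₁ ∪ v₂)
  have h4 := key (v₁ ∩ v₂)
  omega

/-- the influence index is submodular over subnetworks. -/
theorem influenceIndex_submodular
    (V E : Type) [Fintype V] [Fintype E] [DecidableEq V] [DecidableEq E]
    (S : Matrix V E ℝ) (V₁ V₂ : Finset V) (E₁ E₂ : Finset E) :
    influenceIndex V E S (V₁ ∪ V₂) (E₁ ∪ E₂) ≤
      influenceIndex V E S V₁ E₁ + influenceIndex V E S V₂ E₂
        - influenceIndex V E S (V₁ ∩ V₂) (E₁ ∩ E₂) := by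
  have hV := Finset.card_union_add_card_inter V₁ V₂
  have hE := Finset.card_union_add_card_inter E₁ E₂
  have hk := inf_supportedIn_supermodular E (LinearMap.ker S.mulVecLin) E₁ E₂
  have hp := finrank_map_coordProj_submodular V
    (LinearMap.ker (Matrix.transpose S).mulVecLin) V₁ V₂
  unfold influenceIndex
  omega
end

section
/- Let S = [[S₁₁, S₁₂],[S₂₁, S₂₂]] with ker S₁₁ ⊆ ker S₂₁, and S' := S₂₂ − S₂₁ S₁₁⁺ S₁₂. If (r₁, r₂) satisfies S (r₁, r₂)ᵀ = 0, then S' r₂ = 0. That is, the boundary components of any steady-state flux of the full network form a steady-state flux of the reduced network. -/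
open Matrix

/-- if `ker S₁₁ ⊆ ker S₂₁` and `(r₁, r₂)` is a steady-state flux of the
full block matrix `S`, then `r₂` is a steady-state flux of the reduced network:
`S' r₂ = 0` where `S' = S₂₂ - S₂₁ P S₁₂` with `P` the Moore–Penrose pseudoinverse
of `S₁₁`. -/
theorem steady_state_flux_descends
    (V₁ V₂ E₁ E₂ : Type) [Fintype V₁] [Fintype V₂] [Fintype E₁] [Fintype E₂]
    (S₁₁ : Matrix V₁ E₁ ℝ) (S₁₂ : Matrix V₁ E₂ ℝ)
    (S₂₁ : Matrix V₂ E₁ ℝ) (S₂₂ : Matrix V₂ E₂ ℝ)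
    (P : Matrix E₁ V₁ ℝ)
    (hP₁ : S₁₁ * P * S₁₁ = S₁₁) (hP₂ : P * S₁₁ * P = P)
    (hP₃ : (S₁₁ * P)ᵀ = S₁₁ * P) (hP₄ : (P * S₁₁)ᵀ = P * S₁₁)
    (hker : ∀ c : E₁ → ℝ, S₁₁.mulVec c = 0 → S₂₁.mulVec c = 0)
    (r₁ : E₁ → ℝ) (r₂ : E₂ → ℝ)
    (hss : (Matrix.fromBlocks S₁₁ S₁₂ S₂₁ S₂₂).mulVec (Sum.elim r₁ r₂) = 0) :
    (S₂₂ - S₂₁ * P * S₁₂).mulVec r₂ = 0 := by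
  rw [Matrix.fromBlocks_mulVec] at hss
  have h1 : S₁₁.mulVec r₁ + S₁₂.mulVec r₂ = 0 := by
    funext i; exact congrFun hss (Sum.inl i)
  have h2 : S₂₁.mulVec r₁ + S₂₂.mulVec r₂ = 0 := by
    funext i; exact congrFun hss (Sum.inr i)
  have h12 : S₁₂.mulVec r₂ = -(S₁₁.mulVec r₁) := by
    rw [eq_neg_iff_add_eq_zero, add_comm]; exact h1
  set c : E₁ → ℝ := r₁ + P.mulVec (S₁₂.mulVec r₂) with hc
  have hSc : S₁₁.mulVec c = 0 := by
    rw [hc, Matrix.mulVec_add, h12, Matrix.mulVec_neg, Matrix.mulVec_mulVec,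
      Matrix.mulVec_neg, Matrix.mulVec_mulVec, ← Matrix.mul_assoc, hP₁]
    simp
  have h21c := hker c hSc
  rw [hc, Matrix.mulVec_add] at h21c
  have hkey : S₂₁.mulVec r₁ = -((S₂₁ * P * S₁₂).mulVec r₂) := by
    rw [eq_neg_iff_add_eq_zero, ← Matrix.mulVec_mulVec, ← Matrix.mulVec_mulVec]
    exact h21c
  rw [Matrix.sub_mulVec]
  rw [hkey] at h2
  linear_combination (norm := module) h2
end

section
/- Let S = [[S₁₁, S₁₂],[S₂₁, S₂₂]] and S' := S₂₂ − S₂₁ S₁₁⁺ S₁₂. Suppose every conserved charge of S₁₁ extends to a conserved charge of S: for every d₁ with d₁ᵀ S₁₁ = 0 there exists d₂ such that (d₁, d₂)ᵀ S = 0. Then for every c₂ ∈ ker S' and every d₁ ∈ coker S₁₁, d₁ᵀ S₁₂ c₂ = 0; i.e., S₁₂ c₂ ∈ im S₁₁ for all c₂ ∈ ker S'. (The connecting map δ₁ : ker S' → coker S₁₁ is zero.) -/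
open Matrix

/-!
Pair a cokernel vector `d₁` of `S₁₁` with its extension `(d₁, d₂)` to the left kernel of `S`:
then `d₂ᵀ S₂₁ = 0` and `d₁ᵀ S₁₂ = -d₂ᵀ S₂₂`, so for `c₂ ∈ ker S'` we get
`d₁ᵀ S₁₂ c₂ = -d₂ᵀ S₂₁ S₁₁⁺ S₁₂ c₂ = 0`.
For the image statement, `w := (1 - S₁₁ S₁₁⁺) v` lies in the cokernel of `S₁₁` because
`S₁₁ S₁₁⁺` is a symmetric idempotent fixing the columns of `S₁₁`; if `v` is orthogonal to the
cokernel then `w ⬝ w = w ⬝ v = 0`, so `v = S₁₁ (S₁₁⁺ v)`.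
-/

section Blocks

variable {R l m n o : Type*} [Fintype m] [Fintype o]

theorem vecMul_sumElim_fromBlocks_eq_zero_iff [NonUnitalNonAssocSemiring R]
    {A : Matrix m l R} {B : Matrix m n R} {C : Matrix o l R} {D : Matrix o n R}
    {d₁ : m → R} {d₂ : o → R} :
    Sum.elim d₁ d₂ ᵥ* fromBlocks A B C D = 0 ↔
      d₁ ᵥ* A + d₂ ᵥ* C = 0 ∧ d₁ ᵥ* B + d₂ ᵥ* D = 0 := by
  rw [vecMul_fromBlocks, ← Sum.elim_zero_zero, Sum.elim_eq_iff, Sum.elim_comp_inl,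
    Sum.elim_comp_inr]

theorem dotProduct_mulVec_eq_zero_of_mulVec_schur_eq_zero [Fintype l] [Fintype n] [CommRing R]
    {A : Matrix m l R} {B : Matrix m n R} {C : Matrix o l R} {D : Matrix o n R}
    {P : Matrix l m R} {d₁ : m → R} {d₂ : o → R} {c : n → R}
    (hd : Sum.elim d₁ d₂ ᵥ* fromBlocks A B C D = 0) (hd₁ : d₁ ᵥ* A = 0)
    (hc : (D - C * P * B) *ᵥ c = 0) :
    d₁ ⬝ᵥ B *ᵥ c = 0 := by
  obtain ⟨hA, hB⟩ := vecMul_sumElim_fromBlocks_eq_zero_iff.mp hd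
  have hC : d₂ ᵥ* C = 0 := by rwa [hd₁, zero_add] at hA
  have hB' : d₁ ᵥ* B = -(d₂ ᵥ* D) := eq_neg_of_add_eq_zero_left hB
  have hD : D *ᵥ c = (C * P * B) *ᵥ c := by rwa [sub_mulVec, sub_eq_zero] at hc
  rw [dotProduct_mulVec, hB', neg_dotProduct, ← dotProduct_mulVec, hD, ← mulVec_mulVec,
    ← mulVec_mulVec, dotProduct_mulVec, hC, zero_dotProduct, neg_zero]

end Blocks

section GeneralizedInverse

variable {R m n : Type*} [Fintype m] [Fintype n]

theorem vecMul_sub_mulVec_mul_eq_zero [CommRing R] {S : Matrix m n R} {P : Matrix n m R}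
    (h₁ : S * P * S = S) (h₃ : (S * P)ᵀ = S * P) (v : m → R) :
    (v - (S * P) *ᵥ v) ᵥ* S = 0 := by
  rw [sub_vecMul, ← vecMul_transpose, h₃, vecMul_vecMul, h₁, sub_self]

theorem mulVec_mulVec_eq_self_of_forall_dotProduct_eq_zero [CommRing R] [LinearOrder R]
    [IsStrictOrderedRing R] {S : Matrix m n R} {P : Matrix n m R}
    (h₁ : S * P * S = S) (h₃ : (S * P)ᵀ = S * P) {v : m → R}
    (hv : ∀ d : m → R, d ᵥ* S = 0 → d ⬝ᵥ v = 0) :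
    S *ᵥ (P *ᵥ v) = v := by
  set w := v - (S * P) *ᵥ v
  have hw : w ᵥ* S = 0 := vecMul_sub_mulVec_mul_eq_zero h₁ h₃ v
  have hww : w ⬝ᵥ w = 0 := by
    calc w ⬝ᵥ w = w ⬝ᵥ v - w ᵥ* S ⬝ᵥ P *ᵥ v := by
          rw [dotProduct_sub, ← mulVec_mulVec, dotProduct_mulVec]
      _ = 0 := by rw [hv w hw, hw, zero_dotProduct, sub_zero]
  rw [mulVec_mulVec]
  exact (sub_eq_zero.mp (dotProduct_self_eq_zero.mp hww)).symm

end GeneralizedInverse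

theorem connecting_map_zero_general
    (V₁ V₂ E₁ E₂ : Type) [Fintype V₁] [Fintype V₂] [Fintype E₁] [Fintype E₂]
    (S₁₁ : Matrix V₁ E₁ ℝ) (S₁₂ : Matrix V₁ E₂ ℝ)
    (S₂₁ : Matrix V₂ E₁ ℝ) (S₂₂ : Matrix V₂ E₂ ℝ)
    (P : Matrix E₁ V₁ ℝ)
    (hP₁ : S₁₁ * P * S₁₁ = S₁₁)
    (hP₃ : (S₁₁ * P)ᵀ = S₁₁ * P)
    (hext : ∀ d₁ : V₁ → ℝ, Matrix.vecMul d₁ S₁₁ = 0 →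
      ∃ d₂ : V₂ → ℝ,
        Matrix.vecMul (Sum.elim d₁ d₂) (Matrix.fromBlocks S₁₁ S₁₂ S₂₁ S₂₂) = 0) :
    (∀ c₂ : E₂ → ℝ, (S₂₂ - S₂₁ * P * S₁₂).mulVec c₂ = 0 →
      ∀ d₁ : V₁ → ℝ, Matrix.vecMul d₁ S₁₁ = 0 →
        dotProduct d₁ (S₁₂.mulVec c₂) = 0) ∧
    (∀ c₂ : E₂ → ℝ, (S₂₂ - S₂₁ * P * S₁₂).mulVec c₂ = 0 →
      ∃ y : E₁ → ℝ, S₁₁.mulVec y = S₁₂.mulVec c₂) := by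
  have hδ : ∀ c₂ : E₂ → ℝ, (S₂₂ - S₂₁ * P * S₁₂) *ᵥ c₂ = 0 →
      ∀ d₁ : V₁ → ℝ, d₁ ᵥ* S₁₁ = 0 → d₁ ⬝ᵥ S₁₂ *ᵥ c₂ = 0 := by
    intro c₂ hc d₁ hd₁
    obtain ⟨d₂, hd⟩ := hext d₁ hd₁
    exact dotProduct_mulVec_eq_zero_of_mulVec_schur_eq_zero hd hd₁ hc
  exact ⟨hδ, fun c₂ hc =>
    ⟨P *ᵥ (S₁₂ *ᵥ c₂), mulVec_mulVec_eq_self_of_forall_dotProduct_eq_zero hP₁ hP₃ (hδ c₂ hc)⟩⟩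

/-- if every conserved charge of `S₁₁` extends to a conserved charge of
the full block matrix `S`, then the connecting map `δ₁ : ker S' → coker S₁₁` is zero:
for every `c₂ ∈ ker S'` and every `d₁ ∈ coker S₁₁`, `d₁ᵀ S₁₂ c₂ = 0`;
equivalently `S₁₂ c₂ ∈ im S₁₁` for all `c₂ ∈ ker S'`. -/
theorem connecting_map_zero
    (V₁ V₂ E₁ E₂ : Type) [Fintype V₁] [Fintype V₂] [Fintype E₁] [Fintype E₂]
    (S₁₁ : Matrix V₁ E₁ ℝ) (S₁₂ : Matrix V₁ E₂ ℝ)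
    (S₂₁ : Matrix V₂ E₁ ℝ) (S₂₂ : Matrix V₂ E₂ ℝ)
    (P : Matrix E₁ V₁ ℝ)
    (hP₁ : S₁₁ * P * S₁₁ = S₁₁) (hP₂ : P * S₁₁ * P = P)
    (hP₃ : (S₁₁ * P)ᵀ = S₁₁ * P) (hP₄ : (P * S₁₁)ᵀ = P * S₁₁)
    (hext : ∀ d₁ : V₁ → ℝ, Matrix.vecMul d₁ S₁₁ = 0 →
      ∃ d₂ : V₂ → ℝ,
        Matrix.vecMul (Sum.elim d₁ d₂) (Matrix.fromBlocks S₁₁ S₁₂ S₂₁ S₂₂) = 0) :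
    (∀ c₂ : E₂ → ℝ, (S₂₂ - S₂₁ * P * S₁₂).mulVec c₂ = 0 →
      ∀ d₁ : V₁ → ℝ, Matrix.vecMul d₁ S₁₁ = 0 →
        dotProduct d₁ (S₁₂.mulVec c₂) = 0) ∧
    (∀ c₂ : E₂ → ℝ, (S₂₂ - S₂₁ * P * S₁₂).mulVec c₂ = 0 →
      ∃ y : E₁ → ℝ, S₁₁.mulVec y = S₁₂.mulVec c₂) :=
  connecting_map_zero_general V₁ V₂ E₁ E₂ S₁₁ S₁₂ S₂₁ S₂₂ P hP₁ hP₃ hext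
end

section
/- For a block matrix S = [[S₁₁, S₁₂],[S₂₁, S₂₂]] satisfying ker S₁₁ ⊆ ker S₂₁, the sequence 0 → ker S₁₁ → ker S → ker S' → coker S₁₁ → coker S → coker S' → 0 is exact, where the maps are: inclusion c₁ ↦ (c₁, 0); projection (c₁, c₂) ↦ c₂; connecting map c₂ ↦ [S₁₂ c₂]; ψ̄₀ induced by d₁ ↦ (d₁, S₂₁S₁₁⁺d₁); and φ̄₀ induced by (d₁, d₂) ↦ d₂ − S₂₁S₁₁⁺d₁. Here S' := S₂₂ − S₂₁S₁₁⁺S₁₂, coker S₁₁ = ℝ^{V_γ}/im S₁₁, coker S = ℝ^V/im S, coker S' = ℝ^{V∖V_γ}/im S'. -/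
open Matrix

/-- for a block matrix `S = fromBlocks S₁₁ S₁₂ S₂₁ S₂₂` with
`ker S₁₁ ⊆ ker S₂₁`, the sequence
`0 → ker S₁₁ → ker S → ker S' → coker S₁₁ → coker S → coker S' → 0`
is exact, with maps `ψ₁ : c₁ ↦ (c₁,0)`, `φ₁ : (c₁,c₂) ↦ c₂`,
connecting map `δ₁ : c₂ ↦ [S₁₂ c₂]`, `ψ̄₀ : [d₁] ↦ [(d₁, S₂₁ S₁₁⁺ d₁)]`,
`φ̄₀ : [(d₁,d₂)] ↦ [d₂ - S₂₁ S₁₁⁺ d₁]`, where `S' = S₂₂ - S₂₁ S₁₁⁺ S₁₂` and `S₁₁⁺ = P`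
is the Moore–Penrose pseudoinverse.  Exactness is stated elementwise, with membership
in a cokernel-image expressed by existence of a preimage. -/
theorem long_exact_sequence_of_pair
    (V₁ V₂ E₁ E₂ : Type) [Fintype V₁] [Fintype V₂] [Fintype E₁] [Fintype E₂]
    (S₁₁ : Matrix V₁ E₁ ℝ) (S₁₂ : Matrix V₁ E₂ ℝ)
    (S₂₁ : Matrix V₂ E₁ ℝ) (S₂₂ : Matrix V₂ E₂ ℝ)
    (P : Matrix E₁ V₁ ℝ)
    (hP₁ : S₁₁ * P * S₁₁ = S₁₁) (hP₂ : P * S₁₁ * P = P)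
    (hP₃ : (S₁₁ * P)ᵀ = S₁₁ * P) (hP₄ : (P * S₁₁)ᵀ = P * S₁₁)
    (hker : ∀ c : E₁ → ℝ, S₁₁.mulVec c = 0 → S₂₁.mulVec c = 0) :
    let S := Matrix.fromBlocks S₁₁ S₁₂ S₂₁ S₂₂
    let S' := S₂₂ - S₂₁ * P * S₁₂
    -- ψ₁ is well-defined and injective (exactness at ker S₁₁)
    ((∀ c₁ : E₁ → ℝ, S₁₁.mulVec c₁ = 0 →
        S.mulVec (Sum.elim c₁ (0 : E₂ → ℝ)) = 0) ∧
     (∀ c₁ : E₁ → ℝ, S₁₁.mulVec c₁ = 0 →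
        Sum.elim c₁ (0 : E₂ → ℝ) = 0 → c₁ = 0)) ∧
    -- φ₁ is well-defined, and exactness at ker S: ker φ₁ = im ψ₁
    ((∀ c : (E₁ ⊕ E₂) → ℝ, S.mulVec c = 0 → S'.mulVec (c ∘ Sum.inr) = 0) ∧
     (∀ c : (E₁ ⊕ E₂) → ℝ, S.mulVec c = 0 →
        ((c ∘ Sum.inr = 0) ↔
          ∃ c₁ : E₁ → ℝ, S₁₁.mulVec c₁ = 0 ∧ c = Sum.elim c₁ 0))) ∧
    -- exactness at ker S': ker δ₁ = im φ₁
    (∀ c₂ : E₂ → ℝ, S'.mulVec c₂ = 0 →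
      ((∃ y : E₁ → ℝ, S₁₁.mulVec y = S₁₂.mulVec c₂) ↔
        ∃ c : (E₁ ⊕ E₂) → ℝ, S.mulVec c = 0 ∧ c ∘ Sum.inr = c₂)) ∧
    -- exactness at coker S₁₁: ker ψ̄₀ = im δ₁
    (∀ d₁ : V₁ → ℝ,
      ((∃ c : (E₁ ⊕ E₂) → ℝ,
          S.mulVec c = Sum.elim d₁ (S₂₁.mulVec (P.mulVec d₁))) ↔
        ∃ c₂ : E₂ → ℝ, S'.mulVec c₂ = 0 ∧
          ∃ y : E₁ → ℝ, S₁₁.mulVec y = d₁ - S₁₂.mulVec c₂)) ∧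
    -- exactness at coker S: ker φ̄₀ = im ψ̄₀
    (∀ d : (V₁ ⊕ V₂) → ℝ,
      ((∃ y : E₂ → ℝ,
          S'.mulVec y = (d ∘ Sum.inr) - S₂₁.mulVec (P.mulVec (d ∘ Sum.inl))) ↔
        ∃ d₁ : V₁ → ℝ, ∃ c : (E₁ ⊕ E₂) → ℝ,
          d = Sum.elim d₁ (S₂₁.mulVec (P.mulVec d₁)) + S.mulVec c)) ∧
    -- exactness at coker S': φ̄₀ is surjective
    (∀ d₂ : V₂ → ℝ, ∃ d : (V₁ ⊕ V₂) → ℝ, ∃ y : E₂ → ℝ,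
      (d ∘ Sum.inr) - S₂₁.mulVec (P.mulVec (d ∘ Sum.inl)) = d₂ + S'.mulVec y) := by
  intro S S'
  have hSv : ∀ c : (E₁ ⊕ E₂) → ℝ, S.mulVec c =
      Sum.elim (S₁₁.mulVec (c ∘ Sum.inl) + S₁₂.mulVec (c ∘ Sum.inr))
               (S₂₁.mulVec (c ∘ Sum.inl) + S₂₂.mulVec (c ∘ Sum.inr)) :=
    fun c => Matrix.fromBlocks_mulVec S₁₁ S₁₂ S₂₁ S₂₂ c
  have hS'v : ∀ v : E₂ → ℝ,
      S'.mulVec v = S₂₂.mulVec v - S₂₁.mulVec (P.mulVec (S₁₂.mulVec v)) := by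
    intro v
    show (S₂₂ - S₂₁ * P * S₁₂).mulVec v = _
    rw [Matrix.sub_mulVec, Matrix.mulVec_mulVec, Matrix.mulVec_mulVec, Matrix.mul_assoc]
  have hC : ∀ v : E₁ → ℝ, S₂₁.mulVec (P.mulVec (S₁₁.mulVec v)) = S₂₁.mulVec v := by
    intro v
    have h1 : S₁₁.mulVec (v - P.mulVec (S₁₁.mulVec v)) = 0 := by
      rw [Matrix.mulVec_sub, Matrix.mulVec_mulVec, Matrix.mulVec_mulVec,
        hP₁, sub_self]
    have h2 := hker _ h1
    rw [Matrix.mulVec_sub, sub_eq_zero, Matrix.mulVec_mulVec, Matrix.mulVec_mulVec] at h2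
    rw [Matrix.mulVec_mulVec, Matrix.mulVec_mulVec]
    exact h2.symm
  have elim_eq : ∀ {α β : Type} (a a' : α → ℝ) (b b' : β → ℝ),
      Sum.elim a b = Sum.elim a' b' ↔ a = a' ∧ b = b' := by
    intro α β a a' b b'
    constructor
    · intro h
      exact ⟨funext fun i => congrFun h (Sum.inl i), funext fun j => congrFun h (Sum.inr j)⟩
    · rintro ⟨rfl, rfl⟩; rfl
  refine ⟨⟨?_, ?_⟩, ⟨?_, ?_⟩, ?_, ?_, ?_, ?_⟩
  · -- ψ₁ well-defined
    intro c₁ h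
    rw [hSv]
    have : Sum.elim c₁ (0 : E₂ → ℝ) ∘ Sum.inl = c₁ := rfl
    have h2 : Sum.elim c₁ (0 : E₂ → ℝ) ∘ Sum.inr = 0 := rfl
    rw [this, h2]
    simp [h, hker _ h]
  · -- ψ₁ injective
    intro c₁ _ h
    funext i
    exact congrFun h (Sum.inl i)
  · -- φ₁ well-defined
    intro c hc
    rw [hSv] at hc
    have h1 : S₁₁.mulVec (c ∘ Sum.inl) + S₁₂.mulVec (c ∘ Sum.inr) = 0 :=
      funext fun i => congrFun hc (Sum.inl i)
    have h2 : S₂₁.mulVec (c ∘ Sum.inl) + S₂₂.mulVec (c ∘ Sum.inr) = 0 :=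
      funext fun j => congrFun hc (Sum.inr j)
    have hB : S₁₂.mulVec (c ∘ Sum.inr) = -(S₁₁.mulVec (c ∘ Sum.inl)) := by
      linear_combination (norm := module) h1
    rw [hS'v, hB, Matrix.mulVec_neg, Matrix.mulVec_neg, hC]
    linear_combination (norm := module) h2
  · -- exactness at ker S
    intro c hc
    constructor
    · intro h0
      refine ⟨c ∘ Sum.inl, ?_, ?_⟩
      · rw [hSv] at hc
        have h1 : S₁₁.mulVec (c ∘ Sum.inl) + S₁₂.mulVec (c ∘ Sum.inr) = 0 :=
          funext fun i => congrFun hc (Sum.inl i)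
        rw [h0, Matrix.mulVec_zero, add_zero] at h1
        exact h1
      · funext i
        cases i with
        | inl i => rfl
        | inr j => exact congrFun h0 j
    · rintro ⟨c₁, _, rfl⟩
      rfl
  · -- exactness at ker S'
    intro c₂ hc₂
    constructor
    · rintro ⟨y, hy⟩
      refine ⟨Sum.elim (-y) c₂, ?_, rfl⟩
      rw [hSv]
      have e1 : Sum.elim (-y) c₂ ∘ Sum.inl = -y := rfl
      have e2 : Sum.elim (-y) c₂ ∘ Sum.inr = c₂ := rfl
      rw [e1, e2]
      have hD : S₂₂.mulVec c₂ = S₂₁.mulVec (P.mulVec (S₁₂.mulVec c₂)) := by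
        have := hS'v c₂
        rw [hc₂] at this
        linear_combination (norm := module) -this
      have hCy : S₂₁.mulVec y = S₂₂.mulVec c₂ := by
        rw [hD, ← hy, hC]
      rw [Matrix.mulVec_neg, Matrix.mulVec_neg, hy, hCy]
      funext i
      cases i <;> simp
    · rintro ⟨c, hc, rfl⟩
      rw [hSv] at hc
      have h1 : S₁₁.mulVec (c ∘ Sum.inl) + S₁₂.mulVec (c ∘ Sum.inr) = 0 :=
        funext fun i => congrFun hc (Sum.inl i)
      exact ⟨-(c ∘ Sum.inl), by rw [Matrix.mulVec_neg]; linear_combination (norm := module) -h1⟩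
  · -- exactness at coker S₁₁
    intro d₁
    constructor
    · rintro ⟨c, hc⟩
      rw [hSv, elim_eq] at hc
      obtain ⟨h1, h2⟩ := hc
      refine ⟨c ∘ Sum.inr, ?_, c ∘ Sum.inl, by linear_combination (norm := module) h1⟩
      rw [hS'v]
      have : S₁₂.mulVec (c ∘ Sum.inr) = d₁ - S₁₁.mulVec (c ∘ Sum.inl) := by
        linear_combination (norm := module) h1
      rw [this, Matrix.mulVec_sub, Matrix.mulVec_sub, hC]
      linear_combination (norm := module) h2
    · rintro ⟨c₂, hc₂, y, hy⟩
      refine ⟨Sum.elim y c₂, ?_⟩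
      rw [hSv, elim_eq]
      have e1 : Sum.elim y c₂ ∘ Sum.inl = y := rfl
      have e2 : Sum.elim y c₂ ∘ Sum.inr = c₂ := rfl
      rw [e1, e2]
      constructor
      · rw [hy]; module
      · have hCy : S₂₁.mulVec y = S₂₁.mulVec (P.mulVec d₁)
            - S₂₁.mulVec (P.mulVec (S₁₂.mulVec c₂)) := by
          rw [← hC y, hy, Matrix.mulVec_sub, Matrix.mulVec_sub]
        have hS2 := hS'v c₂
        rw [hc₂] at hS2
        rw [hCy]
        linear_combination (norm := module) -hS2
  · -- exactness at coker S
    intro d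
    constructor
    · rintro ⟨y, hy⟩
      refine ⟨(d ∘ Sum.inl) - S₁₂.mulVec y, Sum.elim 0 y, ?_⟩
      rw [hSv]
      have e1 : Sum.elim (0 : E₁ → ℝ) y ∘ Sum.inl = 0 := rfl
      have e2 : Sum.elim (0 : E₁ → ℝ) y ∘ Sum.inr = y := rfl
      rw [e1, e2, Matrix.mulVec_zero, Matrix.mulVec_zero, zero_add, zero_add]
      funext i
      cases i with
      | inl i =>
        simp only [Sum.elim_inl, Pi.add_apply, Pi.sub_apply, Function.comp_apply]
        ring
      | inr j =>
        have : (d ∘ Sum.inr) j = (S₂₁.mulVec (P.mulVec ((d ∘ Sum.inl) - S₁₂.mulVec y))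
            + S₂₂.mulVec y) j := by
          have hS2 := hS'v y
          rw [hy] at hS2
          rw [Matrix.mulVec_sub, Matrix.mulVec_sub]
          have : (d ∘ Sum.inr) j = (S₂₁.mulVec (P.mulVec (d ∘ Sum.inl))
              - S₂₁.mulVec (P.mulVec (S₁₂.mulVec y)) + S₂₂.mulVec y) j := by
            have := congrFun hS2 j
            simp only [Pi.sub_apply, Pi.add_apply, Function.comp_apply] at this ⊢
            linarith
          simpa using this
        simpa using this
    · rintro ⟨d₁, c, rfl⟩
      refine ⟨c ∘ Sum.inr, ?_⟩
      rw [hS'v]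
      have e1 : (Sum.elim d₁ (S₂₁.mulVec (P.mulVec d₁)) + S.mulVec c) ∘ Sum.inl
          = d₁ + (S.mulVec c ∘ Sum.inl) := rfl
      have e2 : (Sum.elim d₁ (S₂₁.mulVec (P.mulVec d₁)) + S.mulVec c) ∘ Sum.inr
          = S₂₁.mulVec (P.mulVec d₁) + (S.mulVec c ∘ Sum.inr) := rfl
      rw [e1, e2, hSv]
      have f1 : (Sum.elim (S₁₁.mulVec (c ∘ Sum.inl) + S₁₂.mulVec (c ∘ Sum.inr))
          (S₂₁.mulVec (c ∘ Sum.inl) + S₂₂.mulVec (c ∘ Sum.inr)) ∘ Sum.inl)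
          = S₁₁.mulVec (c ∘ Sum.inl) + S₁₂.mulVec (c ∘ Sum.inr) := rfl
      have f2 : (Sum.elim (S₁₁.mulVec (c ∘ Sum.inl) + S₁₂.mulVec (c ∘ Sum.inr))
          (S₂₁.mulVec (c ∘ Sum.inl) + S₂₂.mulVec (c ∘ Sum.inr)) ∘ Sum.inr)
          = S₂₁.mulVec (c ∘ Sum.inl) + S₂₂.mulVec (c ∘ Sum.inr) := rfl
      rw [f1, f2]
      rw [Matrix.mulVec_add, Matrix.mulVec_add, Matrix.mulVec_add, Matrix.mulVec_add, hC]
      module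
  · -- surjectivity
    intro d₂
    refine ⟨Sum.elim 0 d₂, 0, ?_⟩
    have e1 : Sum.elim (0 : V₁ → ℝ) d₂ ∘ Sum.inl = 0 := rfl
    have e2 : Sum.elim (0 : V₁ → ℝ) d₂ ∘ Sum.inr = d₂ := rfl
    rw [e1, e2, Matrix.mulVec_zero, Matrix.mulVec_zero, Matrix.mulVec_zero, sub_zero, add_zero]
end

section
/- Decomposition of the influence index: for an output-complete subnetwork γ of a network with stoichiometric matrix S, λ(γ) = c̃(γ) + d_l(γ) − d̃(γ), where c̃(γ) := dim(ker S₁₁) − dim((ker S)_{supp γ}) is the number of emergent cycles, d_l(γ) := dim(coker S / X(γ)) is the number of lost conserved charges with X(γ) := { (d₁,d₂) ∈ coker S : d₁ᵀ S₁₁ = 0 }, and d̃(γ) := dim(coker S₁₁ / D₁₁(γ)) is the number of emergent conserved charges with D₁₁(γ) := { d₁ ∈ coker S₁₁ : ∃ d₂, (d₁,d₂) ∈ coker S }. -/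
open Matrix Module LinearMap

private lemma finrank_comap_subtype' {M : Type*} [AddCommGroup M] [Module ℝ M]
    (p q : Submodule ℝ M) :
    finrank ℝ (Submodule.comap p.subtype q) = finrank ℝ ↥(p ⊓ q) := by
  rw [← Submodule.finrank_map_subtype_eq, Submodule.map_comap_subtype]

private lemma finrank_map_add' {M N : Type*} [AddCommGroup M] [Module ℝ M]
    [AddCommGroup N] [Module ℝ N] [FiniteDimensional ℝ M]
    (f : M →ₗ[ℝ] N) (p : Submodule ℝ M) :
    finrank ℝ (p.map f) + finrank ℝ ↥(p ⊓ ker f) = finrank ℝ p := by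
  have h := LinearMap.finrank_range_add_finrank_ker (f.domRestrict p)
  rwa [LinearMap.range_domRestrict, LinearMap.ker_domRestrict,
    finrank_comap_subtype'] at h


/-- decomposition of the influence index.  For an output-complete
subnetwork `γ` inducing the block decomposition `S = fromBlocks S₁₁ S₁₂ S₂₁ S₂₂`,
`λ(γ) = c̃(γ) + d_l(γ) - d̃(γ)`, where
`λ(γ) = -|V_γ| + |E_γ| - dim (ker S)_{supp γ} + dim P⁰_γ(coker S)`,
`c̃(γ) = dim ker S₁₁ - dim (ker S)_{supp γ}` (emergent cycles),
`d_l(γ) = dim (coker S / X(γ))` (lost conserved charges) with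
`X(γ) = {(d₁,d₂) ∈ coker S : d₁ᵀ S₁₁ = 0}`, and
`d̃(γ) = dim (coker S₁₁ / D₁₁(γ))` (emergent conserved charges) with
`D₁₁(γ) = {d₁ ∈ coker S₁₁ : ∃ d₂, (d₁,d₂) ∈ coker S}`.
Here `coker S` is identified with `ker Sᵀ`. -/
theorem influence_index_decomposition
    (V₁ V₂ E₁ E₂ : Type) [Fintype V₁] [Fintype V₂] [Fintype E₁] [Fintype E₂]
    (S₁₁ : Matrix V₁ E₁ ℝ) (S₁₂ : Matrix V₁ E₂ ℝ)
    (S₂₁ : Matrix V₂ E₁ ℝ) (S₂₂ : Matrix V₂ E₂ ℝ) :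
    let S := Matrix.fromBlocks S₁₁ S₁₂ S₂₁ S₂₂
    -- (ker S)_{supp γ} : cycles of S supported on E₁
    let Ksupp := LinearMap.ker S.mulVecLin ⊓
      LinearMap.ker (LinearMap.funLeft ℝ ℝ (Sum.inr : E₂ → E₁ ⊕ E₂))
    -- coker S ≅ ker Sᵀ, coker S₁₁ ≅ ker S₁₁ᵀ
    let cokS := LinearMap.ker (Sᵀ).mulVecLin
    let cok11 := LinearMap.ker (S₁₁ᵀ).mulVecLin
    -- X(γ) = {(d₁,d₂) ∈ coker S : d₁ ∈ coker S₁₁}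
    let X := cokS ⊓ LinearMap.ker
      ((S₁₁ᵀ).mulVecLin.comp (LinearMap.funLeft ℝ ℝ (Sum.inl : V₁ → V₁ ⊕ V₂)))
    -- D₁₁(γ) = projections to γ of elements of X(γ)
    let D₁₁ := Submodule.map (LinearMap.funLeft ℝ ℝ (Sum.inl : V₁ → V₁ ⊕ V₂)) X
    -- P⁰_γ (coker S)
    let Pcok := Submodule.map (LinearMap.funLeft ℝ ℝ (Sum.inl : V₁ → V₁ ⊕ V₂)) cokS
    -- λ(γ) = c̃(γ) + d_l(γ) - d̃(γ)
    (-(Fintype.card V₁ : ℤ) + (Fintype.card E₁ : ℤ)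
        - (Module.finrank ℝ ↥Ksupp : ℤ) + (Module.finrank ℝ ↥Pcok : ℤ)) =
      ((Module.finrank ℝ (LinearMap.ker S₁₁.mulVecLin) : ℤ)
          - (Module.finrank ℝ ↥Ksupp : ℤ))
        + (Module.finrank ℝ (↥cokS ⧸ Submodule.comap cokS.subtype X) : ℤ)
        - (Module.finrank ℝ (↥cok11 ⧸ Submodule.comap cok11.subtype D₁₁) : ℤ) := by
  intro S Ksupp cokS cok11 X D₁₁ Pcok
  set f := LinearMap.funLeft ℝ ℝ (Sum.inl : V₁ → V₁ ⊕ V₂) with hf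
  -- rank-nullity for S₁₁
  have h1 : finrank ℝ (ker S₁₁.mulVecLin) + S₁₁.rank = Fintype.card E₁ := by
    have := LinearMap.finrank_range_add_finrank_ker S₁₁.mulVecLin
    rw [Module.finrank_fintype_fun_eq_card] at this
    have hr : S₁₁.rank = finrank ℝ ↥(range S₁₁.mulVecLin) := rfl
    omega
  have h2 : finrank ℝ ↥cok11 + S₁₁.rank = Fintype.card V₁ := by
    show finrank ℝ ↥(LinearMap.ker (S₁₁ᵀ).mulVecLin) + S₁₁.rank = Fintype.card V₁
    have := LinearMap.finrank_range_add_finrank_ker (S₁₁ᵀ).mulVecLin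
    rw [Module.finrank_fintype_fun_eq_card] at this
    have ht : S₁₁ᵀ.rank = S₁₁.rank := Matrix.rank_transpose S₁₁
    have hr : S₁₁ᵀ.rank = finrank ℝ ↥(range (S₁₁ᵀ).mulVecLin) := rfl
    have hr2 : S₁₁.rank = finrank ℝ ↥(range S₁₁.mulVecLin) := rfl
    omega
  -- Pcok
  have h3 : finrank ℝ ↥Pcok + finrank ℝ ↥(cokS ⊓ ker f) = finrank ℝ ↥cokS :=
    finrank_map_add' f cokS
  -- D₁₁, using X ⊓ ker f = cokS ⊓ ker f
  have hXf : X ⊓ ker f = cokS ⊓ ker f := by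
    have hle : ker f ≤ ker ((S₁₁ᵀ).mulVecLin.comp f) := fun v hv => by
      simp only [LinearMap.mem_ker, LinearMap.comp_apply] at *
      rw [hv]; simp
    show cokS ⊓ _ ⊓ ker f = cokS ⊓ ker f
    rw [inf_assoc, inf_eq_right.mpr hle]
  have h4 : finrank ℝ ↥D₁₁ + finrank ℝ ↥(cokS ⊓ ker f) = finrank ℝ ↥X := by
    have := finrank_map_add' f X
    rwa [hXf] at this
  -- quotients
  have h5 : finrank ℝ (↥cokS ⧸ Submodule.comap cokS.subtype X) + finrank ℝ ↥X
      = finrank ℝ ↥cokS := by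
    have := Submodule.finrank_quotient_add_finrank (Submodule.comap cokS.subtype X)
    rwa [finrank_comap_subtype', inf_eq_right.mpr inf_le_left] at this
  have hD : D₁₁ ≤ cok11 := by
    rintro x ⟨y, ⟨_, hy2⟩, rfl⟩
    exact hy2
  have h6 : finrank ℝ (↥cok11 ⧸ Submodule.comap cok11.subtype D₁₁) + finrank ℝ ↥D₁₁
      = finrank ℝ ↥cok11 := by
    have := Submodule.finrank_quotient_add_finrank (Submodule.comap cok11.subtype D₁₁)
    rwa [finrank_comap_subtype', inf_eq_right.mpr hD] at this
  omega
end
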